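/- Let a, b ∈ ℝ² with b₁ < b₂, and Z standard normal. Then E[max(a₁ + b₁Z, a₂ + b₂Z)] − max(a₁, a₂) = (b₂ − b₁)·f(−|c|) where c = (a₁ − a₂)/(b₂ − b₁) and f(z) = φ(z) + zΦ(z). -/

import Mathlib

open MeasureTheory ProbabilityTheory Real

/-- The standard normal pdf `φ`. -/
noncomputable def stdNormalPdf (z : ℝ) : ℝ := Real.exp (-z ^ 2 / 2) / Real.sqrt (2 * π)

/-- The standard normal cdf `Φ`. -/
noncomputable def stdNormalCdf (z : ℝ) : ℝ := ∫ t in Set.Iic z, stdNormalPdf t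

/-!
Put `k = b₂ - b₁ > 0`. Since `(a₂ + b₂ z) - (a₁ + b₁ z) = k (z - c)`, the maximum of the two lines
is both `a₂ + b₂ z + k (c - z)⁺` and `a₁ + b₁ z + k (z - c)⁺`. Taking the first form when
`a₁ ≤ a₂` and the second when `a₂ ≤ a₁`, and using `E Z = 0`, the expectation is
`max a₁ a₂ + k E[(-|c| - Z)⁺]` (in the second case after replacing `Z` by `-Z`). Finally
`E[(d - Z)⁺] = ∫_{z ≤ d} (d - z) φ(z) dz = d Φ(d) + φ(d)`, because `φ' = -z φ`.
-/

open Set Filter Topology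

lemma max_eq_add_mul_max_zero {α : Type*} [Ring α] [LinearOrder α] [IsOrderedRing α]
    {x y k t : α} (hk : 0 ≤ k) (h : y - x = k * t) :
    max x y = x + k * max t 0 := by
  rw [mul_max_of_nonneg _ _ hk, ← max_add_add_left, ← h, add_sub_cancel, mul_zero, add_zero,
    max_comm]

lemma integral_add_mul_add_mul_gaussianReal (μ : ℝ) (v : NNReal) (a b k : ℝ) {g : ℝ → ℝ}
    (hg : Integrable g (gaussianReal μ v)) :
    ∫ z, a + b * z + k * g z ∂gaussianReal μ v = a + b * μ + k * ∫ z, g z ∂gaussianReal μ v := by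
  have hid : Integrable (fun z ↦ z) (gaussianReal μ v) :=
    (memLp_id_gaussianReal 1).integrable le_rfl
  have hlin : Integrable (fun z ↦ a + b * z) (gaussianReal μ v) :=
    (integrable_const a).add (hid.const_mul b)
  rw [integral_add hlin (hg.const_mul k), integral_add (integrable_const a) (hid.const_mul b),
    integral_const_mul, integral_const_mul, integral_id_gaussianReal, integral_const,
    probReal_univ, one_smul]

lemma integral_comp_neg_gaussianReal (v : NNReal) (f : ℝ → ℝ) :
    ∫ z, f (-z) ∂gaussianReal 0 v = ∫ z, f z ∂gaussianReal 0 v := by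
  have h := integral_map_equiv (μ := gaussianReal 0 v) (MeasurableEquiv.neg ℝ) f
  simp only [MeasurableEquiv.neg_apply, gaussianReal_map_neg, neg_zero] at h
  exact h.symm

lemma gaussianPDFReal_zero_one : gaussianPDFReal 0 1 = stdNormalPdf := by
  funext x
  simp [gaussianPDFReal, stdNormalPdf, div_eq_inv_mul]

lemma integral_gaussianReal_zero_one_eq_integral_mul (f : ℝ → ℝ) :
    ∫ z, f z ∂gaussianReal 0 1 = ∫ z, stdNormalPdf z * f z := by
  simp [integral_gaussianReal_eq_integral_smul, gaussianPDFReal_zero_one]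

lemma integrable_stdNormalPdf : Integrable stdNormalPdf :=
  gaussianPDFReal_zero_one ▸ integrable_gaussianPDFReal 0 1

lemma integrable_neg_mul_stdNormalPdf : Integrable fun x ↦ -x * stdNormalPdf x := by
  refine ((integrable_mul_exp_neg_mul_sq (b := 1 / 2) (by norm_num)).neg.div_const
    √(2 * π)).congr (ae_of_all _ fun x ↦ ?_)
  simp only [Pi.neg_apply, stdNormalPdf]
  ring_nf

lemma hasDerivAt_stdNormalPdf (x : ℝ) : HasDerivAt stdNormalPdf (-x * stdNormalPdf x) x := by
  have h : HasDerivAt (fun z : ℝ ↦ -z ^ 2 / 2) (-x) x :=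
    ((hasDerivAt_pow 2 x).neg.div_const 2).congr_deriv (by ring)
  exact (h.exp.div_const √(2 * π)).congr_deriv (by simp only [stdNormalPdf]; ring)

lemma tendsto_stdNormalPdf_atBot : Tendsto stdNormalPdf atBot (𝓝 0) := by
  have hsq : Tendsto (fun z : ℝ ↦ z ^ 2) atBot atTop :=
    ((tendsto_pow_atTop (α := ℝ) two_ne_zero).comp tendsto_neg_atBot_atTop).congr neg_sq
  have h := (tendsto_neg_atTop_atBot.comp hsq).atBot_div_const two_pos
  have h' := (tendsto_exp_atBot.comp h).div_const √(2 * π)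
  rw [zero_div] at h'
  exact h'

lemma integral_Iic_neg_mul_stdNormalPdf (d : ℝ) :
    ∫ z in Iic d, -z * stdNormalPdf z = stdNormalPdf d := by
  rw [integral_Iic_of_hasDerivAt_of_tendsto' (fun x _ ↦ hasDerivAt_stdNormalPdf x)
    integrable_neg_mul_stdNormalPdf.integrableOn tendsto_stdNormalPdf_atBot, sub_zero]

lemma integral_max_const_sub_gaussianReal (d : ℝ) :
    ∫ z, max (d - z) 0 ∂gaussianReal 0 1 = stdNormalPdf d + d * stdNormalCdf d := by
  have hind : (fun z ↦ stdNormalPdf z * max (d - z) 0)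
      = (Iic d).indicator fun z ↦ d * stdNormalPdf z + -z * stdNormalPdf z := by
    funext z
    rcases le_or_gt z d with h | h
    · rw [indicator_of_mem (mem_Iic.2 h), max_eq_left (sub_nonneg.2 h)]
      ring
    · rw [indicator_of_notMem (notMem_Iic.2 h), max_eq_right (sub_nonpos.2 h.le), mul_zero]
  rw [integral_gaussianReal_zero_one_eq_integral_mul, hind, integral_indicator measurableSet_Iic,
    integral_add (integrable_stdNormalPdf.const_mul d).integrableOn
      integrable_neg_mul_stdNormalPdf.integrableOn,
    integral_const_mul, integral_Iic_neg_mul_stdNormalPdf, stdNormalCdf, add_comm]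

lemma integral_max_sub_const_gaussianReal (d : ℝ) :
    ∫ z, max (z - d) 0 ∂gaussianReal 0 1 = stdNormalPdf (-d) + -d * stdNormalCdf (-d) := by
  rw [← integral_max_const_sub_gaussianReal,
    ← integral_comp_neg_gaussianReal 1 fun z ↦ max (-d - z) 0]
  simp only [sub_neg_eq_add, neg_add_eq_sub]

/-- two-alternative closed form of the value of information: for `b₁ < b₂`
and `Z` standard normal, `E[max(a₁ + b₁Z, a₂ + b₂Z)] − max(a₁, a₂) = (b₂ − b₁)·f(−|c|)`
where `c = (a₁ − a₂)/(b₂ − b₁)` and `f(z) = φ(z) + zΦ(z)`. -/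
theorem stmt9 (a₁ a₂ b₁ b₂ : ℝ) (hb : b₁ < b₂) (c : ℝ) (hc : c = (a₁ - a₂) / (b₂ - b₁)) :
    (∫ z, max (a₁ + b₁ * z) (a₂ + b₂ * z) ∂(gaussianReal 0 1)) - max a₁ a₂
      = (b₂ - b₁) * (stdNormalPdf (-|c|) + (-|c|) * stdNormalCdf (-|c|)) := by
  have hk : 0 < b₂ - b₁ := sub_pos.2 hb
  have hck : (b₂ - b₁) * c = a₁ - a₂ := by
    rw [hc]
    field_simp
  have hZ : Integrable (fun z ↦ z) (gaussianReal 0 1) := (memLp_id_gaussianReal 1).integrable le_rfl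
  rcases le_total a₁ a₂ with h | h
  · have hmax (z : ℝ) : max (a₁ + b₁ * z) (a₂ + b₂ * z)
        = a₂ + b₂ * z + (b₂ - b₁) * max (c - z) 0 := by
      rw [max_comm]
      exact max_eq_add_mul_max_zero hk.le (by linear_combination -hck)
    have hc0 : c ≤ 0 := hc ▸ div_nonpos_of_nonpos_of_nonneg (sub_nonpos.2 h) hk.le
    simp_rw [hmax]
    rw [integral_add_mul_add_mul_gaussianReal (g := fun z ↦ max (c - z) 0) _ _ _ _ _
        ((integrable_const c).sub hZ).pos_part,
      integral_max_const_sub_gaussianReal, abs_of_nonpos hc0, neg_neg, max_eq_right h]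
    ring
  · have hmax (z : ℝ) : max (a₁ + b₁ * z) (a₂ + b₂ * z)
        = a₁ + b₁ * z + (b₂ - b₁) * max (z - c) 0 :=
      max_eq_add_mul_max_zero hk.le (by linear_combination hck)
    have hc0 : 0 ≤ c := hc ▸ div_nonneg (sub_nonneg.2 h) hk.le
    simp_rw [hmax]
    rw [integral_add_mul_add_mul_gaussianReal (g := fun z ↦ max (z - c) 0) _ _ _ _ _
        (hZ.sub (integrable_const c)).pos_part,
      integral_max_sub_const_gaussianReal, abs_of_nonneg hc0, max_eq_left h]
    ring
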